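/- Two finite multisets S₁, S₂ of positive integers are equal if and only if the multisets of complex roots of unity ⋃_{l ∈ S₁} {e^{2πik/l} : 0 ≤ k < l} and ⋃_{l ∈ S₂} {e^{2πik/l} : 0 ≤ k < l} (counted with multiplicity) are equal. -/
import Mathlib


open Complex

/-- The multiset of complex roots of unity `⋃_{l ∈ S} {e^{2πik/l} : 0 ≤ k < l}`
(counted with multiplicity) associated to a multiset `S` of positive integers. -/
noncomputable def rootsOfUnityMultiset (S : Multiset ℕ) : Multiset ℂ :=
  S.bind fun l => (Multiset.range l).map fun k =>
    Complex.exp (2 * Real.pi * Complex.I * k / l)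

lemma roots_def (S : Multiset ℕ) : rootsOfUnityMultiset S
    = S.bind fun l => (Multiset.range l).map fun k : ℕ =>
        Complex.exp (2 * Real.pi * Complex.I * k / l) := by
  simp [rootsOfUnityMultiset, Multiset.map_map, Function.comp]

lemma block_eq (l : ℕ) :
    ((Multiset.range l).map fun k : ℕ => Complex.exp (2 * Real.pi * Complex.I * k / l))
      = (Multiset.range l).map fun k : ℕ => Complex.exp (2 * Real.pi * Complex.I / l) ^ k := by
  refine Multiset.map_congr rfl fun k _ => ?_
  rw [← Complex.exp_nat_mul]
  congr 1
  ring

lemma count_block {L l : ℕ} (hL : 0 < L) (hl : 0 < l) :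
    ((Multiset.range l).map fun k : ℕ => Complex.exp (2 * Real.pi * Complex.I * k / l)).count
      (Complex.exp (2 * Real.pi * Complex.I / L)) = if L ∣ l then 1 else 0 := by
  have pl := Complex.isPrimitiveRoot_exp l hl.ne'
  have pL := Complex.isPrimitiveRoot_exp L hL.ne'
  set ζl := Complex.exp (2 * Real.pi * Complex.I / l)
  set ζL := Complex.exp (2 * Real.pi * Complex.I / L)
  rw [block_eq]
  have hnodup : ((Multiset.range l).map fun k => ζl ^ k).Nodup := by
    refine Multiset.Nodup.map_on ?_ (Multiset.nodup_range l)
    intro i hi j hj hij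
    exact pl.pow_inj (Multiset.mem_range.mp hi) (Multiset.mem_range.mp hj) hij
  by_cases hdvd : L ∣ l
  · rw [if_pos hdvd]
    refine Multiset.count_eq_one_of_mem hnodup ?_
    rw [Multiset.mem_map]
    have key : ζl ^ (l / L) = ζL := by
      rw [← Complex.exp_nat_mul]
      congr 1
      have hcast : ((l / L : ℕ) : ℂ) = (l : ℂ) / L := by
        rw [Nat.cast_div hdvd (by exact_mod_cast hL.ne')]
      rw [hcast]
      have hl0 : (l : ℂ) ≠ 0 := Nat.cast_ne_zero.mpr hl.ne'
      have hL0 : (L : ℂ) ≠ 0 := Nat.cast_ne_zero.mpr hL.ne'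
      field_simp
    refine ⟨(l / L) % l, Multiset.mem_range.mpr (Nat.mod_lt _ hl), ?_⟩
    have : ζl ^ (l / L) = ζl ^ ((l / L) % l) := by
      conv_lhs => rw [← Nat.div_add_mod (l / L) l]
      rw [pow_add, pow_mul, pl.pow_eq_one, one_pow, one_mul]
    rw [← this, key]
  · rw [if_neg hdvd]
    rw [Multiset.count_eq_zero]
    intro hmem
    obtain ⟨k, _, hk⟩ := Multiset.mem_map.mp hmem
    apply hdvd
    rw [← pL.pow_eq_one_iff_dvd]
    rw [← hk, ← pow_mul, mul_comm k l, pow_mul, pl.pow_eq_one, one_pow]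

lemma count_roots (L : ℕ) (hL : 0 < L) (S : Multiset ℕ) (hS : ∀ l ∈ S, 0 < l) :
    (rootsOfUnityMultiset S).count (Complex.exp (2 * Real.pi * Complex.I / L))
      = (S.filter (L ∣ ·)).card := by
  rw [roots_def]
  induction S using Multiset.induction_on with
  | empty => simp
  | cons a s ih =>
    have ha : 0 < a := hS a (Multiset.mem_cons_self a s)
    have hs : ∀ l ∈ s, 0 < l := fun l hl => hS l (Multiset.mem_cons_of_mem hl)
    rw [Multiset.cons_bind, Multiset.count_add, ih hs, count_block hL ha, Multiset.filter_cons]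
    by_cases hd : L ∣ a
    · simp [hd, add_comm]
    · simp [hd]

lemma roots_card_aux : ∀ n (S₁ S₂ : Multiset ℕ), Multiset.card S₁ = n →
    (∀ l ∈ S₁, 0 < l) → (∀ l ∈ S₂, 0 < l) →
    rootsOfUnityMultiset S₁ = rootsOfUnityMultiset S₂ → S₁ = S₂ := by
  intro n
  induction n using Nat.strong_induction_on with
  | _ n ih =>
  intro S₁ S₂ hcard h₁ h₂ h
  have key : ∀ L, 0 < L → (S₁.filter (L ∣ ·)).card = (S₂.filter (L ∣ ·)).card := by
    intro L hL
    rw [← count_roots L hL S₁ h₁, ← count_roots L hL S₂ h₂, h]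
  have hc2 : Multiset.card S₂ = n := by
    have h1 := key 1 one_pos
    rw [Multiset.filter_eq_self.mpr (fun a _ => one_dvd a),
      Multiset.filter_eq_self.mpr (fun a _ => one_dvd a)] at h1
    omega
  rcases n with _ | m
  · rw [Multiset.card_eq_zero.mp hcard, Multiset.card_eq_zero.mp hc2]
  · set T := (S₁ + S₂).toFinset with hT
    have hTne : T.Nonempty := by
      obtain ⟨a, ha⟩ := Multiset.card_pos_iff_exists_mem.mp
        (by omega : 0 < Multiset.card S₁)
      exact ⟨a, Multiset.mem_toFinset.mpr (Multiset.mem_add.mpr (Or.inl ha))⟩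
    set M := T.max' hTne with hM
    have hMmem : M ∈ S₁ + S₂ := Multiset.mem_toFinset.mp (T.max'_mem hTne)
    have hMpos : 0 < M := by
      rcases Multiset.mem_add.mp hMmem with hmem | hmem
      exacts [h₁ M hmem, h₂ M hmem]
    have hle : ∀ x ∈ S₁ + S₂, x ≤ M := fun x hx =>
      T.le_max' x (Multiset.mem_toFinset.mpr hx)
    have hf1 : S₁.filter (M ∣ ·) = S₁.filter (M = ·) := by
      refine Multiset.filter_congr fun x hx => ?_
      have hxle : x ≤ M := hle x (Multiset.mem_add.mpr (Or.inl hx))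
      have hxpos : 0 < x := h₁ x hx
      constructor
      · intro hdvd; exact Nat.le_antisymm (Nat.le_of_dvd hxpos hdvd) hxle
      · rintro rfl; exact dvd_rfl
    have hf2 : S₂.filter (M ∣ ·) = S₂.filter (M = ·) := by
      refine Multiset.filter_congr fun x hx => ?_
      have hxle : x ≤ M := hle x (Multiset.mem_add.mpr (Or.inr hx))
      have hxpos : 0 < x := h₂ x hx
      constructor
      · intro hdvd; exact Nat.le_antisymm (Nat.le_of_dvd hxpos hdvd) hxle
      · rintro rfl; exact dvd_rfl
    have hcount : S₁.count M = S₂.count M := by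
      rw [Multiset.count_eq_card_filter_eq, Multiset.count_eq_card_filter_eq,
        ← hf1, ← hf2]
      exact key M hMpos
    have hMboth : M ∈ S₁ ∧ M ∈ S₂ := by
      rcases Multiset.mem_add.mp hMmem with hmem | hmem
      · have hp : 0 < S₂.count M := by
          rw [← hcount]; exact Multiset.count_pos.mpr hmem
        exact ⟨hmem, Multiset.count_pos.mp hp⟩
      · have hp : 0 < S₁.count M := by
          rw [hcount]; exact Multiset.count_pos.mpr hmem
        exact ⟨Multiset.count_pos.mp hp, hmem⟩
    have e₁ : S₁ = M ::ₘ S₁.erase M := (Multiset.cons_erase hMboth.1).symm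
    have e₂ : S₂ = M ::ₘ S₂.erase M := (Multiset.cons_erase hMboth.2).symm
    rw [e₁, e₂, roots_def, roots_def, Multiset.cons_bind, Multiset.cons_bind] at h
    have h' := add_left_cancel h
    rw [← roots_def, ← roots_def] at h'
    have hcard' : Multiset.card (S₁.erase M) = m := by
      rw [Multiset.card_erase_of_mem hMboth.1, hcard]; rfl
    have := ih m (Nat.lt_succ_self m) (S₁.erase M) (S₂.erase M) hcard'
      (fun l hl => h₁ l (Multiset.mem_of_mem_erase hl))
      (fun l hl => h₂ l (Multiset.mem_of_mem_erase hl)) h'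
    rw [e₁, e₂, this]

/-- Two finite multisets of positive integers are equal iff their associated multisets of
roots of unity (with multiplicity) are equal. -/
theorem multiset_eq_iff_rootsOfUnityMultiset_eq
    (S₁ S₂ : Multiset ℕ) (hS₁ : ∀ l ∈ S₁, 0 < l) (hS₂ : ∀ l ∈ S₂, 0 < l) :
    S₁ = S₂ ↔ rootsOfUnityMultiset S₁ = rootsOfUnityMultiset S₂ := by
  constructor
  · rintro rfl; rfl
  · intro h
    exact roots_card_aux _ S₁ S₂ rfl hS₁ hS₂ h
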